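/- arXiv:1807.01696 — 3 statements merged into one kernel-verified Lean document; each statement's English description precedes it below -/
import Mathlib

section
/- For bounding boxes (represented as finite measurable sets of positive measure, e.g., axis-aligned rectangles in the plane), the function d(x,y) = 1 - IoU(x,y), where IoU(x,y) = |x ∩ y| / |x ∪ y| is the Jaccard index with respect to Lebesgue measure (with the convention IoU(x,y)=1 if |x ∪ y| = 0), satisfies the triangle inequality: d(x,y) ≤ d(x,z) + d(z,y). -/
/-!
Write `1 - IoU μ x y = μ(x ∆ y) / μ(x ∪ y)`. Adding `r = μ(z \ (x ∪ y))` to numerator and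
denominator can only increase this fraction and turns the denominator into `μ(x ∪ y ∪ z)`.
The new numerator is at most `μ(x ∆ z) + μ(z ∆ y)`, since `x ∆ y ⊆ x ∆ z ∪ z ∆ y` and
`z \ (x ∪ y) ⊆ x ∆ z ∩ z ∆ y`. Shrinking the common denominator to `μ(x ∪ z)` and `μ(z ∪ y)`
then only increases the two terms.
-/

open MeasureTheory

/-- Intersection-over-union (Jaccard index) of two sets w.r.t. a measure,
with the convention that `IoU x y = 1` when the union is null. -/
noncomputable def IoU (μ : Measure (ℝ × ℝ)) (x y : Set (ℝ × ℝ)) : ℝ :=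
  if μ (x ∪ y) = 0 then 1 else (μ (x ∩ y)).toReal / (μ (x ∪ y)).toReal

open Set
open scoped symmDiff ENNReal

section Field

variable {K : Type*} [Field K] [LinearOrder K] [IsStrictOrderedRing K] {a b c r : K}

lemma div_le_add_div_add (ha : 0 ≤ a) (hab : a ≤ b) (hr : 0 ≤ r) :
    a / b ≤ (a + r) / (b + r) := by
  rcases (ha.trans hab).eq_or_lt with rfl | hb
  · rw [le_antisymm hab ha, div_zero]
    positivity
  rw [div_le_div_iff₀ hb (by positivity)]
  nlinarith

lemma div_le_div_of_le_of_nonneg_left (ha : 0 ≤ a) (hac : a ≤ c) (hcb : c ≤ b) :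
    a / b ≤ a / c := by
  rcases (ha.trans hac).eq_or_lt with rfl | hc
  · rw [le_antisymm hac ha, zero_div, zero_div]
  exact div_le_div_of_nonneg_left ha hc hcb

end Field

section Jaccard

variable {α : Type*} [MeasurableSpace α] {μ : Measure α} {x y z : Set α}

/-- Through `x / 0 = 0`, a null union gets distance `0`, matching the convention `IoU = 1`. -/
noncomputable def jaccardDist (μ : Measure α) (s t : Set α) : ℝ :=
  μ.real (s ∆ t) / μ.real (s ∪ t)

lemma measureReal_union_eq_inter_add_symmDiff (hx : MeasurableSet x) (hy : MeasurableSet y)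
    (hxf : μ x ≠ ∞) (hyf : μ y ≠ ∞) :
    μ.real (x ∪ y) = μ.real (x ∩ y) + μ.real (x ∆ y) :=
  (congrArg μ.real (inf_sup_symmDiff x y)).symm.trans <|
    measureReal_union (disjoint_symmDiff_inf x y).symm (hx.symmDiff hy)
      (measure_ne_top_of_subset inter_subset_left hxf) (measure_symmDiff_ne_top hxf hyf)

lemma measureReal_symmDiff_add_sdiff_union_le (hy : MeasurableSet y) (hz : MeasurableSet z)
    (hxf : μ x ≠ ∞) (hyf : μ y ≠ ∞) (hzf : μ z ≠ ∞) :
    μ.real (x ∆ y) + μ.real (z \ (x ∪ y)) ≤ μ.real (x ∆ z) + μ.real (z ∆ y) := by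
  have hsub : z \ (x ∪ y) ⊆ x ∆ z ∩ z ∆ y := by
    intro p hp
    simp only [mem_sdiff, mem_union, not_or] at hp
    simp [mem_symmDiff, hp]
  calc μ.real (x ∆ y) + μ.real (z \ (x ∪ y))
      ≤ μ.real (x ∆ z ∪ z ∆ y) + μ.real (x ∆ z ∩ z ∆ y) :=
        add_le_add (measureReal_mono (symmDiff_triangle x z y)) (measureReal_mono hsub)
    _ = μ.real (x ∆ z) + μ.real (z ∆ y) := measureReal_union_add_inter (hz.symmDiff hy)

lemma jaccardDist_triangle (hx : MeasurableSet x) (hy : MeasurableSet y) (hz : MeasurableSet z)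
    (hxf : μ x ≠ ∞) (hyf : μ y ≠ ∞) (hzf : μ z ≠ ∞) :
    jaccardDist μ x y ≤ jaccardDist μ x z + jaccardDist μ z y := by
  have hU : μ.real (x ∪ y) + μ.real (z \ (x ∪ y)) = μ.real (x ∪ y ∪ z) :=
    measureReal_add_sdiff (hx.union hy)
  calc jaccardDist μ x y
      ≤ (μ.real (x ∆ y) + μ.real (z \ (x ∪ y))) / (μ.real (x ∪ y) + μ.real (z \ (x ∪ y))) :=
        div_le_add_div_add measureReal_nonneg (measureReal_mono symmDiff_subset_union)
          measureReal_nonneg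
    _ ≤ (μ.real (x ∆ z) + μ.real (z ∆ y)) / μ.real (x ∪ y ∪ z) := by
        rw [hU]
        gcongr ?_ / _
        exact measureReal_symmDiff_add_sdiff_union_le hy hz hxf hyf hzf
    _ = μ.real (x ∆ z) / μ.real (x ∪ y ∪ z) + μ.real (z ∆ y) / μ.real (x ∪ y ∪ z) := add_div ..
    _ ≤ jaccardDist μ x z + jaccardDist μ z y := by
        gcongr <;> refine div_le_div_of_le_of_nonneg_left measureReal_nonneg
          (measureReal_mono symmDiff_subset_union) (measureReal_mono ?_)
        · exact union_subset_union_left z subset_union_left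
        · exact union_subset subset_union_right (subset_union_right.trans subset_union_left)

end Jaccard

lemma one_sub_IoU_eq_jaccardDist {μ : Measure (ℝ × ℝ)} {x y : Set (ℝ × ℝ)}
    (hx : MeasurableSet x) (hy : MeasurableSet y) (hxf : μ x ≠ ∞) (hyf : μ y ≠ ∞) :
    1 - IoU μ x y = jaccardDist μ x y := by
  by_cases h0 : μ (x ∪ y) = 0
  · simp [IoU, jaccardDist, h0, Measure.real]
  have hpos : μ.real (x ∪ y) ≠ 0 := (measureReal_ne_zero_iff (by finiteness)).2 h0
  rw [IoU, if_neg h0, ← measureReal_def, ← measureReal_def, jaccardDist, one_sub_div hpos,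
    measureReal_union_eq_inter_add_symmDiff hx hy hxf hyf, add_sub_cancel_left]

theorem jaccard_triangle_general
    (x y z : Set (ℝ × ℝ))
    (hx : MeasurableSet x) (hy : MeasurableSet y) (hz : MeasurableSet z)
    (hxf : volume x < ⊤) (hyf : volume y < ⊤) (hzf : volume z < ⊤) :
    1 - IoU volume x y ≤ (1 - IoU volume x z) + (1 - IoU volume z y) := by
  rw [one_sub_IoU_eq_jaccardDist hx hy hxf.ne hyf.ne,
    one_sub_IoU_eq_jaccardDist hx hz hxf.ne hzf.ne, one_sub_IoU_eq_jaccardDist hz hy hzf.ne hyf.ne]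
  exact jaccardDist_triangle hx hy hz hxf.ne hyf.ne hzf.ne

/-- The Jaccard distance `1 - IoU` satisfies the triangle inequality on
measurable sets of finite positive measure. -/
theorem jaccard_triangle
    (x y z : Set (ℝ × ℝ))
    (hx : MeasurableSet x) (hy : MeasurableSet y) (hz : MeasurableSet z)
    (hxf : volume x < ⊤) (hyf : volume y < ⊤) (hzf : volume z < ⊤)
    (hxp : 0 < volume x) (hyp : 0 < volume y) (hzp : 0 < volume z) :
    1 - IoU volume x y ≤ (1 - IoU volume x z) + (1 - IoU volume z y) :=
  jaccard_triangle_general x y z hx hy hz hxf hyf hzf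
end

section
/- Let d be a metric bounded above by c > 0 on a space S. For finite subsets X, Y of S and a fixed matching (injective partial map) assigning to each matched pair (x_i, y_{x_i}) the cost d(x_i, y_{x_i}), define E(X,Y) = (1/l) · ( Σ_{matched pairs with d ≤ c} d(x_i, y_{x_i}) + c·N_FP + c·N_FN ), where l = max(|X|,|Y|), N_FP is the number of unmatched elements of Y, and N_FN is the number of unmatched elements of X. Then for the optimal-assignment version (infimum of E over all matchings), E defines a metric on the set of finite subsets of S. -/
/-- `M` is a matching (injective partial pairing) between the finite sets
`X` and `Y`: every pair of `M` joins an element of `X` with an element of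
`Y`, and both coordinate projections are injective on `M`. -/
def IsMatching {S : Type*} [DecidableEq S] (M : Finset (S × S))
    (X Y : Finset S) : Prop :=
  (∀ p ∈ M, p.1 ∈ X ∧ p.2 ∈ Y) ∧
  (∀ p ∈ M, ∀ q ∈ M, (p.1 = q.1 → p = q) ∧ (p.2 = q.2 → p = q))

/-- The optimal-assignment DASA-type error with cutoff `c` and order `p = 1`:
the infimum over matchings of the averaged total of the matched costs plus
`c` for each unmatched detection (false positive) and each unmatched ground
truth (false negative). -/
noncomputable def dasaDist {S : Type*} [DecidableEq S] (d : S → S → ℝ) (c : ℝ)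
    (X Y : Finset S) : ℝ :=
  sInf { r : ℝ | ∃ M : Finset (S × S), IsMatching M X Y ∧
    r = (1 / (max X.card Y.card : ℝ)) *
      ((∑ p ∈ M, d p.1 p.2) + c * ((Y.card : ℝ) - M.card)
        + c * ((X.card : ℝ) - M.card)) }

section Helpers
variable {S : Type*} [DecidableEq S] (d : S → S → ℝ) (c : ℝ)

noncomputable def mCost (X Y : Finset S) (M : Finset (S × S)) : ℝ :=
  (1 / (max X.card Y.card : ℝ)) *
      ((∑ p ∈ M, d p.1 p.2) + c * ((Y.card : ℝ) - M.card)
        + c * ((X.card : ℝ) - M.card))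

def costSet (X Y : Finset S) : Set ℝ :=
  { r : ℝ | ∃ M : Finset (S × S), IsMatching M X Y ∧ r = mCost d c X Y M }

variable {X Y : Finset S} {M : Finset (S × S)}

lemma matching_empty : IsMatching (∅ : Finset (S × S)) X Y :=
  ⟨fun p hp => absurd hp (Finset.notMem_empty p),
   fun p hp => absurd hp (Finset.notMem_empty p)⟩

lemma matching_image_fst (h : IsMatching M X Y) :
    (M.image Prod.fst).card = M.card :=
  Finset.card_image_of_injOn (fun p hp q hq hpq => (h.2 p hp q hq).1 hpq)

lemma matching_image_snd (h : IsMatching M X Y) :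
    (M.image Prod.snd).card = M.card :=
  Finset.card_image_of_injOn (fun p hp q hq hpq => (h.2 p hp q hq).2 hpq)

lemma matching_card_left (h : IsMatching M X Y) : M.card ≤ X.card := by
  rw [← matching_image_fst h]
  exact Finset.card_le_card (fun x hx => by
    obtain ⟨p, hp, rfl⟩ := Finset.mem_image.1 hx; exact (h.1 p hp).1)

lemma matching_card_right (h : IsMatching M X Y) : M.card ≤ Y.card := by
  rw [← matching_image_snd h]
  exact Finset.card_le_card (fun x hx => by
    obtain ⟨p, hp, rfl⟩ := Finset.mem_image.1 hx; exact (h.1 p hp).2)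

variable (h_nonneg : ∀ x y, 0 ≤ d x y) (hc : 0 ≤ c)

include h_nonneg in
lemma mCost_nonneg (hc : 0 ≤ c) (h : IsMatching M X Y) : 0 ≤ mCost d c X Y M := by
  have h1 : (M.card : ℝ) ≤ X.card := Nat.cast_le.2 (matching_card_left h)
  have h2 : (M.card : ℝ) ≤ Y.card := Nat.cast_le.2 (matching_card_right h)
  have hs : 0 ≤ ∑ p ∈ M, d p.1 p.2 := Finset.sum_nonneg (fun p _ => h_nonneg _ _)
  apply mul_nonneg
  · positivity
  · have : 0 ≤ c * ((Y.card : ℝ) - M.card) := mul_nonneg hc (by linarith)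
    have : 0 ≤ c * ((X.card : ℝ) - M.card) := mul_nonneg hc (by linarith)
    linarith

include h_nonneg hc in
lemma costSet_bddBelow : BddBelow (costSet d c X Y) := by
  refine ⟨0, fun r hr => ?_⟩
  obtain ⟨M, hM, rfl⟩ := hr
  exact mCost_nonneg d c h_nonneg hc hM

lemma costSet_nonempty : (costSet d c X Y).Nonempty :=
  ⟨mCost d c X Y ∅, ∅, matching_empty, rfl⟩

lemma dasaDist_def : dasaDist d c X Y = sInf (costSet d c X Y) := rfl

include h_nonneg hc in
lemma dasaDist_le (h : IsMatching M X Y) :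
    dasaDist d c X Y ≤ mCost d c X Y M :=
  csInf_le (costSet_bddBelow d c h_nonneg hc) ⟨M, h, rfl⟩

include h_nonneg hc in
lemma dasaDist_nonneg : 0 ≤ dasaDist d c X Y :=
  le_csInf (costSet_nonempty d c) (fun r hr => by
    obtain ⟨M, hM, rfl⟩ := hr; exact mCost_nonneg d c h_nonneg hc hM)

lemma costSet_finite : (costSet d c X Y).Finite := by
  apply Set.Finite.subset
    (Finset.finite_toSet (((X ×ˢ Y).powerset).image (fun M => mCost d c X Y M)))
  rintro r ⟨M, hM, rfl⟩
  simp only [Finset.coe_image, Set.mem_image, Finset.mem_coe, Finset.mem_powerset]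
  exact ⟨M, fun p hp => Finset.mem_product.2 (hM.1 p hp), rfl⟩

lemma exists_optimal (X Y : Finset S) :
    ∃ M : Finset (S × S), IsMatching M X Y ∧ dasaDist d c X Y = mCost d c X Y M :=
  (costSet_nonempty d c).csInf_mem (costSet_finite d c)

end Helpers

section More
variable {S : Type*} [DecidableEq S] (d : S → S → ℝ) (c : ℝ)
variable {X Y : Finset S} {M : Finset (S × S)}

lemma matching_swap (h : IsMatching M X Y) :
    IsMatching (M.image Prod.swap) Y X := by
  constructor
  · rintro p hp
    obtain ⟨q, hq, rfl⟩ := Finset.mem_image.1 hp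
    exact ⟨(h.1 q hq).2, (h.1 q hq).1⟩
  · rintro p hp q hq
    obtain ⟨p', hp', rfl⟩ := Finset.mem_image.1 hp
    obtain ⟨q', hq', rfl⟩ := Finset.mem_image.1 hq
    constructor
    · intro hh
      have := (h.2 p' hp' q' hq').2 hh
      rw [this]
    · intro hh
      have := (h.2 p' hp' q' hq').1 hh
      rw [this]

lemma mCost_swap (h_symm : ∀ x y, d x y = d y x) (h : IsMatching M X Y) :
    mCost d c Y X (M.image Prod.swap) = mCost d c X Y M := by
  unfold mCost
  have hcard : (M.image Prod.swap).card = M.card :=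
    Finset.card_image_of_injective _ Prod.swap_injective
  have hsum : ∑ p ∈ M.image Prod.swap, d p.1 p.2 = ∑ p ∈ M, d p.1 p.2 := by
    rw [Finset.sum_image (fun p _ q _ hpq => Prod.swap_injective hpq)]
    exact Finset.sum_congr rfl (fun p _ => h_symm _ _)
  rw [hcard, hsum, max_comm (Y.card : ℝ) (X.card : ℝ)]
  ring

lemma dasaDist_symm (h_symm : ∀ x y, d x y = d y x) (X Y : Finset S) :
    dasaDist d c X Y = dasaDist d c Y X := by
  rw [dasaDist_def, dasaDist_def]
  congr 1
  ext r
  constructor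
  · rintro ⟨M, hM, rfl⟩
    exact ⟨M.image Prod.swap, matching_swap hM, (mCost_swap d c h_symm hM).symm⟩
  · rintro ⟨M, hM, rfl⟩
    exact ⟨M.image Prod.swap, matching_swap hM, (mCost_swap d c h_symm hM).symm⟩

/-- extension of a matching to a maximal one -/
lemma matching_extend (hc : 0 ≤ c) (h_bdd : ∀ x y, d x y ≤ c) :
    ∀ (i : ℕ) (M : Finset (S × S)) (X Y : Finset S), IsMatching M X Y →
      M.card + i = min X.card Y.card →
      ∃ M', IsMatching M' X Y ∧ M'.card = min X.card Y.card ∧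
        ∑ p ∈ M', d p.1 p.2 ≤ (∑ p ∈ M, d p.1 p.2) + c * i := by
  intro i
  induction i with
  | zero =>
    intro M X Y hM hcard
    exact ⟨M, hM, by omega, by simp⟩
  | succ i ih =>
    intro M X Y hM hcard
    have hx : (X \ M.image Prod.fst).Nonempty := by
      rw [← Finset.card_pos, Finset.card_sdiff_of_subset (fun x hx => by
        obtain ⟨p, hp, rfl⟩ := Finset.mem_image.1 hx; exact (hM.1 p hp).1)]
      rw [matching_image_fst hM]
      omega
    have hy : (Y \ M.image Prod.snd).Nonempty := by
      rw [← Finset.card_pos, Finset.card_sdiff_of_subset (fun y hy => by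
        obtain ⟨p, hp, rfl⟩ := Finset.mem_image.1 hy; exact (hM.1 p hp).2)]
      rw [matching_image_snd hM]
      omega
    obtain ⟨x, hx⟩ := hx
    obtain ⟨y, hy⟩ := hy
    obtain ⟨hxX, hxM⟩ := Finset.mem_sdiff.1 hx
    obtain ⟨hyY, hyM⟩ := Finset.mem_sdiff.1 hy
    have hxM' : ∀ p ∈ M, p.1 ≠ x := by
      intro p hp he
      exact hxM (Finset.mem_image.2 ⟨p, hp, he⟩)
    have hyM' : ∀ p ∈ M, p.2 ≠ y := by
      intro p hp he
      exact hyM (Finset.mem_image.2 ⟨p, hp, he⟩)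
    have hnotmem : (x, y) ∉ M := fun hmem => hxM' _ hmem rfl
    have hM2 : IsMatching (insert (x, y) M) X Y := by
      constructor
      · intro p hp
        rcases Finset.mem_insert.1 hp with rfl | hp
        · exact ⟨hxX, hyY⟩
        · exact hM.1 p hp
      · intro p hp q hq
        rcases Finset.mem_insert.1 hp with rfl | hp <;>
          rcases Finset.mem_insert.1 hq with rfl | hq
        · exact ⟨fun _ => rfl, fun _ => rfl⟩
        · exact ⟨fun h => absurd h.symm (hxM' q hq), fun h => absurd h.symm (hyM' q hq)⟩
        · exact ⟨fun h => absurd h (hxM' p hp), fun h => absurd h (hyM' p hp)⟩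
        · exact hM.2 p hp q hq
    obtain ⟨M', hM', hcard', hsum'⟩ := ih (insert (x, y) M) X Y hM2
      (by rw [Finset.card_insert_of_notMem hnotmem]; omega)
    refine ⟨M', hM', hcard', ?_⟩
    rw [Finset.sum_insert hnotmem] at hsum'
    have := h_bdd x y
    push_cast
    push_cast at hsum'
    linarith

end More

section Arith

lemma key_arith (c S S1 S2 m n k a b t : ℝ) (hc : 0 < c)
    (hm : 1 ≤ m) (hn : 1 ≤ n) (hk : 1 ≤ k)
    (hS0 : 0 ≤ S) (hS1 : 0 ≤ S1) (hS2 : 0 ≤ S2)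
    (hSle : S ≤ S1 + S2) (hSct : S ≤ c * t)
    (ham : a ≤ m) (hak : a ≤ k) (hbn : b ≤ n) (hbk : b ≤ k)
    (hta : t ≤ a) (htb : t ≤ b) (h0t : 0 ≤ t) (habtk : a + b ≤ t + k) :
    (1 / max m n) * (S + c * (min m n - t) + c * (n - min m n) + c * (m - min m n))
      ≤ (1 / max m k) * (S1 + c * (k - a) + c * (m - a))
      + (1 / max k n) * (S2 + c * (n - b) + c * (k - b)) := by
  set l := max m n with hl
  set K := max l k with hKdef
  have hml : m ≤ l := le_max_left _ _
  have hnl : n ≤ l := le_max_right _ _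
  have hlK : l ≤ K := le_max_left _ _
  have hkK : k ≤ K := le_max_right _ _
  have hl1 : (1:ℝ) ≤ l := hm.trans hml
  have hK1 : (1:ℝ) ≤ K := hl1.trans hlK
  have hW1 : 0 ≤ S1 + c * (k - a) + c * (m - a) := by
    have := mul_nonneg hc.le (by linarith : (0:ℝ) ≤ k - a)
    have := mul_nonneg hc.le (by linarith : (0:ℝ) ≤ m - a)
    linarith
  have hW2 : 0 ≤ S2 + c * (n - b) + c * (k - b) := by
    have := mul_nonneg hc.le (by linarith : (0:ℝ) ≤ n - b)
    have := mul_nonneg hc.le (by linarith : (0:ℝ) ≤ k - b)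
    linarith
  have hmk : max m k ≤ K := max_le (hml.trans hlK) hkK
  have hkn : max k n ≤ K := max_le hkK (hnl.trans hlK)
  have hmkpos : (0:ℝ) < max m k := lt_of_lt_of_le one_pos (hm.trans (le_max_left _ _))
  have hknpos : (0:ℝ) < max k n := lt_of_lt_of_le one_pos (hk.trans (le_max_left _ _))
  have step1 : (1/K) * ((S1 + c * (k - a) + c * (m - a)) + (S2 + c * (n - b) + c * (k - b)))
      ≤ (1 / max m k) * (S1 + c * (k - a) + c * (m - a))
      + (1 / max k n) * (S2 + c * (n - b) + c * (k - b)) := by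
    rw [mul_add]
    exact add_le_add
      (mul_le_mul_of_nonneg_right (one_div_le_one_div_of_le hmkpos hmk) hW1)
      (mul_le_mul_of_nonneg_right (one_div_le_one_div_of_le hknpos hkn) hW2)
  refine le_trans ?_ step1
  rw [one_div_mul_eq_div, one_div_mul_eq_div,
    div_le_div_iff₀ (by linarith) (by linarith)]
  have hsl : min m n + l = m + n := min_add_max m n
  have hKb : K ≤ k + (m - a) + (n - b) :=
    max_le (max_le (by linarith) (by linarith)) (by linarith)
  have e1 : S * K ≤ (S1 + S2) * l + (c * t) * (K - l) := by
    have h1 : S * l ≤ (S1 + S2) * l :=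
      mul_le_mul_of_nonneg_right hSle (by linarith)
    have h2 : S * (K - l) ≤ (c * t) * (K - l) :=
      mul_le_mul_of_nonneg_right hSct (by linarith)
    linarith [h1, h2]
  have e4 : c * l * (K - t) ≤ c * l * (2*k + m + n - 2*a - 2*b) := by
    have h3 : K - t ≤ 2*k + m + n - 2*a - 2*b := by linarith
    exact mul_le_mul_of_nonneg_left h3 (mul_nonneg hc.le (by linarith))
  have e2 : c * K * (min m n + l) = c * K * (m + n) := by rw [hsl]
  linarith [e1, e4, e2]

end Arith

section Bound
variable {S : Type*} [DecidableEq S] (d : S → S → ℝ) (c : ℝ)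
variable {X Y : Finset S}

lemma dasaDist_le_c (hc : 0 < c) (h_nonneg : ∀ x y, 0 ≤ d x y)
    (h_bdd : ∀ x y, d x y ≤ c) (X Y : Finset S) : dasaDist d c X Y ≤ c := by
  obtain ⟨M', hM', hcard', hsum'⟩ :=
    matching_extend d c hc.le h_bdd (min X.card Y.card) ∅ X Y (matching_empty) (by simp)
  have hle := dasaDist_le d c h_nonneg hc.le hM'
  refine hle.trans ?_
  unfold mCost
  rcases Nat.eq_zero_or_pos (max X.card Y.card) with h0 | hpos
  · have hx : X.card = 0 := by omega
    have hy : Y.card = 0 := by omega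
    have hm : M'.card = 0 := by omega
    rw [Finset.card_eq_zero.1 hm] at hsum' ⊢
    simp [hx, hy]
    positivity
  · have hlpos : (0:ℝ) < max (X.card:ℝ) (Y.card:ℝ) := by
      have h1 : (0:ℝ) < ((max X.card Y.card : ℕ) : ℝ) := by exact_mod_cast hpos
      simpa [Nat.cast_max] using h1
    rw [div_mul_eq_mul_div, div_le_iff₀ hlpos]
    simp only [Finset.sum_empty, zero_add] at hsum'
    have hsl : min (X.card:ℝ) (Y.card:ℝ) + max (X.card:ℝ) (Y.card:ℝ)
        = (X.card:ℝ) + (Y.card:ℝ) := min_add_max _ _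
    have hcr : (M'.card : ℝ) = min (X.card:ℝ) (Y.card:ℝ) := by
      rw [hcard']; push_cast [Nat.cast_min]; ring
    have hsum'' : ∑ p ∈ M', d p.1 p.2 ≤ c * min (X.card:ℝ) (Y.card:ℝ) := by
      rw [Nat.cast_min] at hsum'; exact hsum'
    have e : c * (min (X.card:ℝ) (Y.card:ℝ) + max (X.card:ℝ) (Y.card:ℝ))
        = c * ((X.card:ℝ) + (Y.card:ℝ)) := by rw [hsl]
    rw [hcr]
    ring_nf
    nlinarith [hsum'', e]
end Bound

section Main
variable {S : Type*} [DecidableEq S] (d : S → S → ℝ) (c : ℝ)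

lemma costSet_empty_left (Y : Finset S) :
    costSet d c ∅ Y = {mCost d c ∅ Y ∅} := by
  ext r
  simp only [costSet, Set.mem_setOf_eq, Set.mem_singleton_iff]
  constructor
  · rintro ⟨M, hM, rfl⟩
    have hMe : M = ∅ := Finset.eq_empty_of_forall_notMem
      (fun p hp => absurd (hM.1 p hp).1 (Finset.notMem_empty _))
    rw [hMe]
  · rintro rfl; exact ⟨∅, matching_empty, rfl⟩

lemma dasaDist_empty_empty : dasaDist d c (∅ : Finset S) ∅ = 0 := by
  rw [dasaDist_def, costSet_empty_left, csInf_singleton]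
  unfold mCost
  simp

lemma dasaDist_empty_left (Y : Finset S) (hY : Y.Nonempty) :
    dasaDist d c ∅ Y = c := by
  rw [dasaDist_def, costSet_empty_left, csInf_singleton]
  unfold mCost
  have hn : (0:ℝ) < Y.card := by exact_mod_cast Finset.card_pos.2 hY
  simp only [Finset.card_empty, Nat.cast_zero, Finset.sum_empty, Finset.card_empty,
    sub_zero, mul_zero, add_zero, zero_add, max_eq_right hn.le]
  field_simp

lemma dasaDist_self (h_nonneg : ∀ x y, 0 ≤ d x y) (hc : 0 ≤ c)
    (h_eq : ∀ x y, d x y = 0 ↔ x = y) (X : Finset S) : dasaDist d c X X = 0 := by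
  have hinj : Function.Injective (fun x : S => (x, x)) := by
    intro a b h; exact congrArg Prod.fst h
  have hM : IsMatching (X.image fun x => (x, x)) X X := by
    constructor
    · intro p hp
      obtain ⟨x, hx, rfl⟩ := Finset.mem_image.1 hp
      exact ⟨hx, hx⟩
    · intro p hp q hq
      obtain ⟨x, hx, rfl⟩ := Finset.mem_image.1 hp
      obtain ⟨y, hy, rfl⟩ := Finset.mem_image.1 hq
      exact ⟨fun h => by simp_all, fun h => by simp_all⟩
  refine le_antisymm ?_ (dasaDist_nonneg d c h_nonneg hc)
  have hle := dasaDist_le d c h_nonneg hc hM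
  refine hle.trans (le_of_eq ?_)
  unfold mCost
  rw [Finset.card_image_of_injective _ hinj,
    Finset.sum_image (fun x _ y _ h => hinj h)]
  have : ∑ x ∈ X, d x x = 0 :=
    Finset.sum_eq_zero (fun x _ => (h_eq x x).2 rfl)
  rw [this]
  simp

lemma dasaDist_eq_zero (hc : 0 < c) (h_nonneg : ∀ x y, 0 ≤ d x y)
    (h_eq : ∀ x y, d x y = 0 ↔ x = y) {X Y : Finset S}
    (h : dasaDist d c X Y = 0) : X = Y := by
  obtain ⟨M, hM, hopt⟩ := exists_optimal d c X Y
  rw [h] at hopt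
  rcases Nat.eq_zero_or_pos (max X.card Y.card) with h0 | hpos
  · have hx : X = ∅ := Finset.card_eq_zero.1 (by omega)
    have hy : Y = ∅ := Finset.card_eq_zero.1 (by omega)
    rw [hx, hy]
  · have hl : (0:ℝ) < max (X.card : ℝ) (Y.card : ℝ) := by
      have h1 : (0:ℝ) < ((max X.card Y.card : ℕ) : ℝ) := by exact_mod_cast hpos
      simpa [Nat.cast_max] using h1
    unfold mCost at hopt
    have hs : 0 ≤ ∑ p ∈ M, d p.1 p.2 := Finset.sum_nonneg (fun p _ => h_nonneg _ _)
    have h1 : (M.card : ℝ) ≤ X.card := Nat.cast_le.2 (matching_card_left hM)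
    have h2 : (M.card : ℝ) ≤ Y.card := Nat.cast_le.2 (matching_card_right hM)
    have hc1 : 0 ≤ c * ((Y.card : ℝ) - M.card) := mul_nonneg hc.le (by linarith)
    have hc2 : 0 ≤ c * ((X.card : ℝ) - M.card) := mul_nonneg hc.le (by linarith)
    have hinner : (∑ p ∈ M, d p.1 p.2) + c * ((Y.card : ℝ) - M.card)
        + c * ((X.card : ℝ) - M.card) = 0 := by
      rcases mul_eq_zero.1 hopt.symm with hzz | hzz
      · exfalso
        rw [one_div] at hzz
        exact (inv_ne_zero (ne_of_gt hl)) hzz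
      · exact hzz
    have hsum0 : ∑ p ∈ M, d p.1 p.2 = 0 := by linarith
    have hMX : (M.card : ℝ) = X.card := by nlinarith
    have hMY : (M.card : ℝ) = Y.card := by nlinarith
    have hdiag : ∀ p ∈ M, p.1 = p.2 := by
      intro p hp
      have := (Finset.sum_eq_zero_iff_of_nonneg (fun p _ => h_nonneg p.1 p.2)).1 hsum0 p hp
      exact (h_eq _ _).1 this
    have hXM : M.image Prod.fst = X := by
      apply Finset.eq_of_subset_of_card_le
      · intro x hx
        obtain ⟨p, hp, rfl⟩ := Finset.mem_image.1 hx
        exact (hM.1 p hp).1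
      · rw [matching_image_fst hM]
        exact_mod_cast hMX.ge
    have hYM : M.image Prod.snd = Y := by
      apply Finset.eq_of_subset_of_card_le
      · intro y hy
        obtain ⟨p, hp, rfl⟩ := Finset.mem_image.1 hy
        exact (hM.1 p hp).2
      · rw [matching_image_snd hM]
        exact_mod_cast hMY.ge
    rw [← hXM, ← hYM]
    exact Finset.image_congr (fun p hp => hdiag p hp)

end Main

section Tri
variable {S : Type*} [DecidableEq S] (d : S → S → ℝ) (c : ℝ)

lemma dasaDist_triangle (hc : 0 < c) (h_nonneg : ∀ x y, 0 ≤ d x y)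
    (h_symm : ∀ x y, d x y = d y x)
    (h_tri : ∀ x y z, d x y ≤ d x z + d z y)
    (h_bdd : ∀ x y, d x y ≤ c) (X Y Z : Finset S) :
    dasaDist d c X Y ≤ dasaDist d c X Z + dasaDist d c Z Y := by
  by_cases hX : X = ∅
  · subst hX
    by_cases hY : Y = ∅
    · subst hY
      rw [dasaDist_empty_empty]
      exact add_nonneg (dasaDist_nonneg d c h_nonneg hc.le)
        (dasaDist_nonneg d c h_nonneg hc.le)
    · rw [dasaDist_empty_left d c Y (Finset.nonempty_of_ne_empty hY)]
      by_cases hZ : Z = ∅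
      · subst hZ
        rw [dasaDist_empty_empty, dasaDist_empty_left d c Y (Finset.nonempty_of_ne_empty hY)]
        linarith
      · rw [dasaDist_empty_left d c Z (Finset.nonempty_of_ne_empty hZ)]
        linarith [dasaDist_nonneg d c h_nonneg hc.le (X := Z) (Y := Y)]
  by_cases hY : Y = ∅
  · subst hY
    rw [dasaDist_symm d c h_symm X ∅, dasaDist_empty_left d c X (Finset.nonempty_of_ne_empty hX)]
    by_cases hZ : Z = ∅
    · subst hZ
      rw [dasaDist_empty_empty, dasaDist_symm d c h_symm X ∅,
        dasaDist_empty_left d c X (Finset.nonempty_of_ne_empty hX)]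
      linarith
    · rw [dasaDist_symm d c h_symm Z ∅, dasaDist_empty_left d c Z (Finset.nonempty_of_ne_empty hZ)]
      linarith [dasaDist_nonneg d c h_nonneg hc.le (X := X) (Y := Z)]
  by_cases hZ : Z = ∅
  · subst hZ
    rw [dasaDist_symm d c h_symm X ∅, dasaDist_empty_left d c X (Finset.nonempty_of_ne_empty hX),
      dasaDist_empty_left d c Y (Finset.nonempty_of_ne_empty hY)]
    linarith [dasaDist_le_c d c hc h_nonneg h_bdd X Y]
  -- main case
  classical
  obtain ⟨M1, hM1, hE1⟩ := exists_optimal d c X Z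
  obtain ⟨M2, hM2, hE2⟩ := exists_optimal d c Z Y
  set g : S → S := fun z => if h : ∃ y, (z, y) ∈ M2 then h.choose else z with hgdef
  have hg : ∀ z ∈ M2.image Prod.fst, (z, g z) ∈ M2 := by
    intro z hz
    obtain ⟨p, hp, rfl⟩ := Finset.mem_image.1 hz
    have hex : ∃ y, (p.1, y) ∈ M2 := ⟨p.2, by simpa using hp⟩
    simp only [hgdef, dif_pos hex]
    exact hex.choose_spec
  set M1' := M1.filter (fun p => p.2 ∈ M2.image Prod.fst) with hM1'def
  have hsub : M1' ⊆ M1 := Finset.filter_subset _ _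
  have hinj : ∀ p ∈ M1', ∀ q ∈ M1', (p.1, g p.2) = (q.1, g q.2) → p = q := by
    intro p hp q hq h
    have h1 := congrArg Prod.fst h
    exact (hM1.2 p (hsub hp) q (hsub hq)).1 h1
  have hsnd : ∀ p ∈ M1', ∀ q ∈ M1', (p.2, g p.2) = (q.2, g q.2) → p = q := by
    intro p hp q hq h
    have h1 := congrArg Prod.fst h
    exact (hM1.2 p (hsub hp) q (hsub hq)).2 h1
  set Mc := M1'.image (fun p => (p.1, g p.2)) with hMcdef
  have htcard : Mc.card = M1'.card :=
    Finset.card_image_of_injOn (fun p hp q hq h =>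
      hinj p (Finset.mem_coe.1 hp) q (Finset.mem_coe.1 hq) h)
  have hMc : IsMatching Mc X Y := by
    constructor
    · intro p hp
      obtain ⟨q, hq, rfl⟩ := Finset.mem_image.1 hp
      exact ⟨(hM1.1 q (hsub hq)).1, (hM2.1 _ (hg q.2 (Finset.mem_filter.1 hq).2)).2⟩
    · intro p hp q hq
      obtain ⟨p', hp', rfl⟩ := Finset.mem_image.1 hp
      obtain ⟨q', hq', rfl⟩ := Finset.mem_image.1 hq
      constructor
      · intro h
        rw [(hM1.2 p' (hsub hp') q' (hsub hq')).1 h]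
      · intro h
        have hp2 : (p'.2, g p'.2) ∈ M2 := hg _ (Finset.mem_filter.1 hp').2
        have hq2 : (q'.2, g q'.2) ∈ M2 := hg _ (Finset.mem_filter.1 hq').2
        have hpq : (p'.2, g p'.2) = (q'.2, g q'.2) := (hM2.2 _ hp2 _ hq2).2 h
        have h22 := congrArg Prod.fst hpq
        rw [(hM1.2 p' (hsub hp') q' (hsub hq')).2 h22]
  -- sum bounds
  have hsum1 : ∑ p ∈ Mc, d p.1 p.2 = ∑ p ∈ M1', d p.1 (g p.2) :=
    Finset.sum_image hinj
  have hle1 : ∑ p ∈ M1', d p.1 p.2 ≤ ∑ p ∈ M1, d p.1 p.2 :=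
    Finset.sum_le_sum_of_subset_of_nonneg hsub (fun p _ _ => h_nonneg _ _)
  have him2 : M1'.image (fun p => (p.2, g p.2)) ⊆ M2 := by
    intro q hq
    obtain ⟨p, hp, rfl⟩ := Finset.mem_image.1 hq
    exact hg _ (Finset.mem_filter.1 hp).2
  have hle2 : ∑ p ∈ M1', d p.2 (g p.2) ≤ ∑ p ∈ M2, d p.1 p.2 := by
    have heq : ∑ q ∈ M1'.image (fun p => (p.2, g p.2)), d q.1 q.2
        = ∑ p ∈ M1', d p.2 (g p.2) := Finset.sum_image hsnd
    rw [← heq]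
    exact Finset.sum_le_sum_of_subset_of_nonneg him2 (fun p _ _ => h_nonneg _ _)
  have hSle : ∑ p ∈ Mc, d p.1 p.2
      ≤ (∑ p ∈ M1, d p.1 p.2) + ∑ p ∈ M2, d p.1 p.2 := by
    rw [hsum1]
    have hsum2 : ∑ p ∈ M1', d p.1 (g p.2)
        ≤ ∑ p ∈ M1', (d p.1 p.2 + d p.2 (g p.2)) :=
      Finset.sum_le_sum (fun p _ => h_tri _ _ _)
    rw [Finset.sum_add_distrib] at hsum2
    linarith
  have hSct : ∑ p ∈ Mc, d p.1 p.2 ≤ c * Mc.card := by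
    calc ∑ p ∈ Mc, d p.1 p.2 ≤ Mc.card • c :=
          Finset.sum_le_card_nsmul _ _ _ (fun p _ => h_bdd _ _)
      _ = c * Mc.card := by rw [nsmul_eq_mul]; ring
  -- cardinality facts
  have hta : Mc.card ≤ M1.card := htcard ▸ Finset.card_le_card hsub
  have htb : Mc.card ≤ M2.card := by
    have h1 : (M1'.image (fun p => (p.2, g p.2))).card = M1'.card :=
      Finset.card_image_of_injOn (fun p hp q hq h =>
        hsnd p (Finset.mem_coe.1 hp) q (Finset.mem_coe.1 hq) h)
    rw [htcard, ← h1]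
    exact Finset.card_le_card him2
  have habtk : M1.card + M2.card ≤ Mc.card + Z.card := by
    have hAB : M1'.image Prod.snd = (M1.image Prod.snd) ∩ (M2.image Prod.fst) := by
      ext z
      simp only [Finset.mem_image, Finset.mem_inter, hM1'def, Finset.mem_filter]
      constructor
      · rintro ⟨p, ⟨hp, hp2⟩, rfl⟩
        exact ⟨⟨p, hp, rfl⟩, hp2⟩
      · rintro ⟨⟨p, hp, rfl⟩, hz⟩
        exact ⟨p, ⟨hp, hz⟩, rfl⟩
    have hA : (M1.image Prod.snd).card = M1.card := matching_image_snd hM1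
    have hB : (M2.image Prod.fst).card = M2.card := matching_image_fst hM2
    have hABc : (M1'.image Prod.snd).card = M1'.card :=
      Finset.card_image_of_injOn (fun p hp q hq h =>
        (hM1.2 p (hsub (Finset.mem_coe.1 hp)) q (hsub (Finset.mem_coe.1 hq))).2 h)
    have hunion : (M1.image Prod.snd) ∪ (M2.image Prod.fst) ⊆ Z := by
      apply Finset.union_subset
      · intro z hz
        obtain ⟨p, hp, rfl⟩ := Finset.mem_image.1 hz
        exact (hM1.1 p hp).2
      · intro z hz
        obtain ⟨p, hp, rfl⟩ := Finset.mem_image.1 hz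
        exact (hM2.1 p hp).1
    have hiu := Finset.card_inter_add_card_union
      (M1.image Prod.snd) (M2.image Prod.fst)
    have hun : ((M1.image Prod.snd) ∪ (M2.image Prod.fst)).card ≤ Z.card :=
      Finset.card_le_card hunion
    rw [← hAB] at hiu
    omega
  -- extend Mc to a maximal matching
  have hsmin : Mc.card ≤ min X.card Y.card :=
    le_min (hta.trans (matching_card_left hM1)) (htb.trans (matching_card_right hM2))
  obtain ⟨M', hM', hcard', hsum'⟩ := matching_extend d c hc.le h_bdd
    (min X.card Y.card - Mc.card) Mc X Y hMc (by omega)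
  refine (dasaDist_le d c h_nonneg hc.le hM').trans ?_
  rw [hE1, hE2]
  unfold mCost
  have hm1 : (1:ℝ) ≤ X.card := by
    exact_mod_cast Nat.one_le_iff_ne_zero.2 (fun h => hX (Finset.card_eq_zero.1 h))
  have hn1 : (1:ℝ) ≤ Y.card := by
    exact_mod_cast Nat.one_le_iff_ne_zero.2 (fun h => hY (Finset.card_eq_zero.1 h))
  have hk1 : (1:ℝ) ≤ Z.card := by
    exact_mod_cast Nat.one_le_iff_ne_zero.2 (fun h => hZ (Finset.card_eq_zero.1 h))
  have key := key_arith c (∑ p ∈ Mc, d p.1 p.2) (∑ p ∈ M1, d p.1 p.2)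
    (∑ p ∈ M2, d p.1 p.2) (X.card) (Y.card) (Z.card) (M1.card) (M2.card) (Mc.card)
    hc hm1 hn1 hk1
    (Finset.sum_nonneg (fun p _ => h_nonneg _ _))
    (Finset.sum_nonneg (fun p _ => h_nonneg _ _))
    (Finset.sum_nonneg (fun p _ => h_nonneg _ _))
    hSle hSct
    (Nat.cast_le.2 (matching_card_left hM1))
    (Nat.cast_le.2 (matching_card_right hM1))
    (Nat.cast_le.2 (matching_card_right hM2))
    (Nat.cast_le.2 (matching_card_left hM2))
    (Nat.cast_le.2 hta) (Nat.cast_le.2 htb) (Nat.cast_nonneg _)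
    (by exact_mod_cast habtk)
  refine le_trans ?_ key
  apply mul_le_mul_of_nonneg_left _ (by positivity)
  have hminr : ((min X.card Y.card : ℕ) : ℝ) = min (X.card : ℝ) (Y.card : ℝ) := by
    push_cast [Nat.cast_min]; ring
  have hir : ((min X.card Y.card - Mc.card : ℕ) : ℝ)
      = min (X.card : ℝ) (Y.card : ℝ) - (Mc.card : ℝ) := by
    rw [Nat.cast_sub hsmin, hminr]
  rw [hir] at hsum'
  have hcr : ((M'.card : ℕ) : ℝ) = min (X.card : ℝ) (Y.card : ℝ) := by
    rw [hcard']; exact hminr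
  have e : c * ((M'.card : ℕ) : ℝ) = c * min (X.card : ℝ) (Y.card : ℝ) := by
    rw [hcr]
  linarith [hsum', e]

end Tri


/-- If `d` is a metric on `S` bounded above by `c > 0`, then the
optimal-assignment error `dasaDist d c` is a metric on finite subsets of `S`. -/
theorem dasaDist_is_metric {S : Type*} [DecidableEq S] (d : S → S → ℝ) (c : ℝ)
    (hc : 0 < c)
    (h_nonneg : ∀ x y, 0 ≤ d x y)
    (h_eq : ∀ x y, d x y = 0 ↔ x = y)
    (h_symm : ∀ x y, d x y = d y x)
    (h_tri : ∀ x y z, d x y ≤ d x z + d z y)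
    (h_bdd : ∀ x y, d x y ≤ c) :
    (∀ X Y : Finset S, 0 ≤ dasaDist d c X Y) ∧
    (∀ X Y : Finset S, dasaDist d c X Y = 0 ↔ X = Y) ∧
    (∀ X Y : Finset S, dasaDist d c X Y = dasaDist d c Y X) ∧
    (∀ X Y Z : Finset S,
      dasaDist d c X Y ≤ dasaDist d c X Z + dasaDist d c Z Y) := by
  refine ⟨fun X Y => dasaDist_nonneg d c h_nonneg hc.le, fun X Y => ?_,
    fun X Y => dasaDist_symm d c h_symm X Y,
    fun X Y Z => dasaDist_triangle d c hc h_nonneg h_symm h_tri h_bdd X Y Z⟩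
  constructor
  · exact dasaDist_eq_zero d c hc h_nonneg h_eq
  · rintro rfl
    exact dasaDist_self d c h_nonneg hc.le h_eq X
end

section
/- For any three finite measurable sets x, y, z with μ(x ∪ z) > 0 and μ(z ∪ y) > 0 and μ(x ∪ y) > 0, the inequality IoU(x,z) + IoU(z,y) ≤ 1 + IoU(x,y) holds, where IoU denotes the Jaccard index with respect to the measure μ. -/
open MeasureTheory

open scoped symmDiff

/-- Algebraic core of the Steinhaus transform triangle inequality. -/
lemma iou_steinhaus_aux (a b c u v w : ℝ)
    (ha : 0 ≤ a) (hb : 0 ≤ b) (hv : 0 ≤ v) (hw : 0 ≤ w)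
    (htri : u ≤ v + w) (h1 : c ≤ b + w) (h2 : c ≤ a + v)
    (p1 : 0 < a + b + u) (p2 : 0 < a + c + v) (p3 : 0 < c + b + w) :
    2 * u / (a + b + u) ≤ 2 * v / (a + c + v) + 2 * w / (c + b + w) := by
  have p4 : 0 < a + b + (v + w) := by linarith
  have g1 : 2 * v / (a + b + (v + w)) ≤ 2 * v / (a + c + v) := by
    rw [div_le_div_iff₀ p4 p2]
    nlinarith [mul_nonneg hv (sub_nonneg.2 h1)]
  have g2 : 2 * w / (a + b + (v + w)) ≤ 2 * w / (c + b + w) := by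
    rw [div_le_div_iff₀ p4 p3]
    nlinarith [mul_nonneg hw (sub_nonneg.2 h2)]
  calc 2 * u / (a + b + u) ≤ 2 * (v + w) / (a + b + (v + w)) := by
        rw [div_le_div_iff₀ p1 p4]; nlinarith
    _ = 2 * v / (a + b + (v + w)) + 2 * w / (a + b + (v + w)) := by ring
    _ ≤ 2 * v / (a + c + v) + 2 * w / (c + b + w) := add_le_add g1 g2

/-- The Steinhaus form of the Jaccard triangle inequality:
`IoU(x,z) + IoU(z,y) ≤ 1 + IoU(x,y)`. -/
theorem iou_steinhaus_inequality {α : Type*} [MeasurableSpace α]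
    (μ : Measure α) (x y z : Set α)
    (hx : MeasurableSet x) (hy : MeasurableSet y) (hz : MeasurableSet z)
    (hxf : μ x < ⊤) (hyf : μ y < ⊤) (hzf : μ z < ⊤)
    (hxz : 0 < μ (x ∪ z)) (hzy : 0 < μ (z ∪ y)) (hxy : 0 < μ (x ∪ y)) :
    (μ (x ∩ z)).toReal / (μ (x ∪ z)).toReal
      + (μ (z ∩ y)).toReal / (μ (z ∪ y)).toReal
      ≤ 1 + (μ (x ∩ y)).toReal / (μ (x ∪ y)).toReal := by
  -- key decomposition: μ (s ∪ t) = μ (s ∆ t) + μ (s ∩ t)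
  have key : ∀ s t : Set α, MeasurableSet s → MeasurableSet t →
      μ (s ∪ t) = μ (s ∆ t) + μ (s ∩ t) := by
    intro s t hs ht
    have hst : (s ∆ t) ∪ (s ∩ t) = s ∪ t := symmDiff_sup_inf s t
    rw [← hst]
    exact measure_union (disjoint_symmDiff_inf s t) (hs.inter ht)
  -- finiteness facts
  have hUxz : μ (x ∪ z) < ⊤ := measure_union_lt_top hxf hzf
  have hUzy : μ (z ∪ y) < ⊤ := measure_union_lt_top hzf hyf
  have hUxy : μ (x ∪ y) < ⊤ := measure_union_lt_top hxf hyf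
  have hDxz : μ (x ∆ z) < ⊤ :=
    lt_of_le_of_lt (measure_mono symmDiff_le_sup) hUxz
  have hDzy : μ (z ∆ y) < ⊤ :=
    lt_of_le_of_lt (measure_mono symmDiff_le_sup) hUzy
  have hDxy : μ (x ∆ y) < ⊤ :=
    lt_of_le_of_lt (measure_mono symmDiff_le_sup) hUxy
  have hIxz : μ (x ∩ z) < ⊤ :=
    lt_of_le_of_lt (measure_mono (Set.inter_subset_left.trans Set.subset_union_left)) hUxz
  have hIzy : μ (z ∩ y) < ⊤ :=
    lt_of_le_of_lt (measure_mono (Set.inter_subset_left.trans Set.subset_union_left)) hUzy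
  have hIxy : μ (x ∩ y) < ⊤ :=
    lt_of_le_of_lt (measure_mono (Set.inter_subset_left.trans Set.subset_union_left)) hUxy
  -- real versions of key decomposition
  have kxz : (μ (x ∪ z)).toReal = (μ (x ∆ z)).toReal + (μ (x ∩ z)).toReal := by
    rw [key x z hx hz, ENNReal.toReal_add hDxz.ne hIxz.ne]
  have kzy : (μ (z ∪ y)).toReal = (μ (z ∆ y)).toReal + (μ (z ∩ y)).toReal := by
    rw [key z y hz hy, ENNReal.toReal_add hDzy.ne hIzy.ne]
  have kxy : (μ (x ∪ y)).toReal = (μ (x ∆ y)).toReal + (μ (x ∩ y)).toReal := by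
    rw [key x y hx hy, ENNReal.toReal_add hDxy.ne hIxy.ne]
  -- inclusion-exclusion
  have iexz : (μ (x ∪ z)).toReal + (μ (x ∩ z)).toReal
      = (μ x).toReal + (μ z).toReal := by
    rw [← ENNReal.toReal_add hUxz.ne hIxz.ne, ← ENNReal.toReal_add hxf.ne hzf.ne,
      measure_union_add_inter x hz]
  have iezy : (μ (z ∪ y)).toReal + (μ (z ∩ y)).toReal
      = (μ z).toReal + (μ y).toReal := by
    rw [← ENNReal.toReal_add hUzy.ne hIzy.ne, ← ENNReal.toReal_add hzf.ne hyf.ne,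
      measure_union_add_inter z hy]
  have iexy : (μ (x ∪ y)).toReal + (μ (x ∩ y)).toReal
      = (μ x).toReal + (μ y).toReal := by
    rw [← ENNReal.toReal_add hUxy.ne hIxy.ne, ← ENNReal.toReal_add hxf.ne hyf.ne,
      measure_union_add_inter x hy]
  -- triangle inequality for the symmetric-difference measure
  have htri : (μ (x ∆ y)).toReal ≤ (μ (x ∆ z)).toReal + (μ (z ∆ y)).toReal := by
    rw [← ENNReal.toReal_add hDxz.ne hDzy.ne]
    exact ENNReal.toReal_mono (ENNReal.add_ne_top.2 ⟨hDxz.ne, hDzy.ne⟩)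
      (measure_symmDiff_le x z y)
  -- z is covered by y together with z ∆ y, and by x together with x ∆ z
  have h1 : (μ z).toReal ≤ (μ y).toReal + (μ (z ∆ y)).toReal := by
    have hz1 : μ z ≤ μ y + μ (z ∆ y) := by
      rw [add_comm]
      exact le_trans (measure_mono (le_symmDiff_sup_right z y)) (measure_union_le _ _)
    rw [← ENNReal.toReal_add hyf.ne hDzy.ne]
    exact ENNReal.toReal_mono (ENNReal.add_ne_top.2 ⟨hyf.ne, hDzy.ne⟩) hz1
  have h2 : (μ z).toReal ≤ (μ x).toReal + (μ (x ∆ z)).toReal := by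
    have hz2 : μ z ≤ μ x + μ (x ∆ z) := by
      rw [add_comm]
      exact le_trans (measure_mono (le_symmDiff_sup_left x z)) (measure_union_le _ _)
    rw [← ENNReal.toReal_add hxf.ne hDxz.ne]
    exact ENNReal.toReal_mono (ENNReal.add_ne_top.2 ⟨hxf.ne, hDxz.ne⟩) hz2
  -- positivity of the real denominators
  have pxz : 0 < (μ (x ∪ z)).toReal := ENNReal.toReal_pos hxz.ne' hUxz.ne
  have pzy : 0 < (μ (z ∪ y)).toReal := ENNReal.toReal_pos hzy.ne' hUzy.ne
  have pxy : 0 < (μ (x ∪ y)).toReal := ENNReal.toReal_pos hxy.ne' hUxy.ne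
  -- rewrite IoU as 1 - d
  have exz : (μ (x ∩ z)).toReal / (μ (x ∪ z)).toReal
      = 1 - (μ (x ∆ z)).toReal / (μ (x ∪ z)).toReal := by
    field_simp; linarith
  have ezy : (μ (z ∩ y)).toReal / (μ (z ∪ y)).toReal
      = 1 - (μ (z ∆ y)).toReal / (μ (z ∪ y)).toReal := by
    field_simp; linarith
  have exy : (μ (x ∩ y)).toReal / (μ (x ∪ y)).toReal
      = 1 - (μ (x ∆ y)).toReal / (μ (x ∪ y)).toReal := by
    field_simp; linarith
  rw [exz, ezy, exy]
  -- reduce to the Jaccard distance triangle inequality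
  have main : (μ (x ∆ y)).toReal / (μ (x ∪ y)).toReal
      ≤ (μ (x ∆ z)).toReal / (μ (x ∪ z)).toReal
        + (μ (z ∆ y)).toReal / (μ (z ∪ y)).toReal := by
    have e1 : (μ (x ∪ z)).toReal
        = ((μ x).toReal + (μ z).toReal + (μ (x ∆ z)).toReal) / 2 := by linarith
    have e2 : (μ (z ∪ y)).toReal
        = ((μ z).toReal + (μ y).toReal + (μ (z ∆ y)).toReal) / 2 := by linarith
    have e3 : (μ (x ∪ y)).toReal
        = ((μ x).toReal + (μ y).toReal + (μ (x ∆ y)).toReal) / 2 := by linarith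
    have q1 : (μ (x ∆ z)).toReal / (μ (x ∪ z)).toReal
        = 2 * (μ (x ∆ z)).toReal
          / ((μ x).toReal + (μ z).toReal + (μ (x ∆ z)).toReal) := by
      rw [e1, div_div_eq_mul_div, mul_comm]
    have q2 : (μ (z ∆ y)).toReal / (μ (z ∪ y)).toReal
        = 2 * (μ (z ∆ y)).toReal
          / ((μ z).toReal + (μ y).toReal + (μ (z ∆ y)).toReal) := by
      rw [e2, div_div_eq_mul_div, mul_comm]
    have q3 : (μ (x ∆ y)).toReal / (μ (x ∪ y)).toReal
        = 2 * (μ (x ∆ y)).toReal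
          / ((μ x).toReal + (μ y).toReal + (μ (x ∆ y)).toReal) := by
      rw [e3, div_div_eq_mul_div, mul_comm]
    rw [q1, q2, q3]
    exact iou_steinhaus_aux (μ x).toReal (μ y).toReal (μ z).toReal
      (μ (x ∆ y)).toReal (μ (x ∆ z)).toReal (μ (z ∆ y)).toReal
      ENNReal.toReal_nonneg ENNReal.toReal_nonneg ENNReal.toReal_nonneg
      ENNReal.toReal_nonneg htri h1 h2 (by linarith) (by linarith) (by linarith)
  linarith
end
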